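/- Assume Ω ∈ [π/2, π). Suppose R₁ ≥ R_a, R₂ ≥ R_a and d₁, d₂, d₃ ≥ 0 are such that the pair (L, φ) with L = d₁ + R₁Ω/2 + d₂ + R₂Ω/2 + d₃ and φ given by φ(s) = 0 on [0, d₁], φ(s) = (s − d₁)/R₁ on [d₁, d₁ + R₁Ω/2], φ(s) = Ω/2 on [d₁ + R₁Ω/2, d₁ + R₁Ω/2 + d₂], φ(s) = Ω/2 + (s − d₁ − R₁Ω/2 − d₂)/R₂ on the next interval of length R₂Ω/2, and φ(s) = Ω thereafter (the concatenation: segment d₁, arc of radius R₁ and angle Ω/2, segment d₂, arc of radius R₂ and angle Ω/2, segment d₃) is admissible. Then R₁ = R₂ = R_a, d₁ = d₂ = 0 and d₃ = D; that is, such a curve is admissible only if it reduces to the arc-then-segment curve (L₀, φ₀). -/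

import Mathlib

/-!
Splitting `∫₀^L (cos φ, sin φ)` over the five pieces gives the endpoint `B` in closed form.
Pairing it with the normal `(sin Ω, -cos Ω)` of the final direction `β` eliminates `d₃` and leaves
`d₁ sin Ω + (R₁ - R_a)(cos (Ω/2) - cos Ω) + d₂ sin (Ω/2) + (R₂ - R_a)(1 - cos (Ω/2)) = 0`.
For `0 < Ω < π` every coefficient is positive and every other factor nonnegative, so all of
them vanish; the second coordinate of `B` then forces `d₃ = D`.
-/

open Real

/-- `φ` is `K`-Lipschitz on `[0, L]`. -/
def LipOn (φ : ℝ → ℝ) (L K : ℝ) : Prop :=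
  ∀ s ∈ Set.Icc (0:ℝ) L, ∀ t ∈ Set.Icc (0:ℝ) L, |φ s - φ t| ≤ K * |s - t|

/-- The maximal curvature of the curve `(L, φ)`: the least Lipschitz constant of `φ`
(essential supremum of `φ'`) on `[0, L]`. -/
noncomputable def maxCurv (φ : ℝ → ℝ) (L : ℝ) : ℝ :=
  sInf {K : ℝ | 0 ≤ K ∧ LipOn φ L K}

/-- An admissible curve for the data `(Ω, b₁, b₂)` : a pair `(L, φ)` with `L > 0`,
`φ` nondecreasing and Lipschitz on `[0, L]`, `φ 0 = 0`, `φ L = Ω`,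
`∫₀^L cos (φ s) ds = b₁` and `∫₀^L sin (φ s) ds = b₂`. -/
def Admissible (Ω b₁ b₂ L : ℝ) (φ : ℝ → ℝ) : Prop :=
  0 < L ∧ MonotoneOn φ (Set.Icc 0 L) ∧ (∃ K : ℝ, 0 ≤ K ∧ LipOn φ L K) ∧
  φ 0 = 0 ∧ φ L = Ω ∧
  (∫ s in (0:ℝ)..L, Real.cos (φ s)) = b₁ ∧
  (∫ s in (0:ℝ)..L, Real.sin (φ s)) = b₂

/-- First coordinate of the associated plane curve. -/
noncomputable def xcoord (φ : ℝ → ℝ) (s : ℝ) : ℝ := ∫ t in (0:ℝ)..s, Real.cos (φ t)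

/-- Second coordinate of the associated plane curve. -/
noncomputable def ycoord (φ : ℝ → ℝ) (s : ℝ) : ℝ := ∫ t in (0:ℝ)..s, Real.sin (φ t)

theorem LipOn.continuousOn {φ : ℝ → ℝ} {L K : ℝ} (h : LipOn φ L K) :
    ContinuousOn φ (Set.Icc 0 L) := by
  refine (LipschitzOnWith.of_dist_le_mul (K := K.toNNReal) fun s hs t ht => ?_).continuousOn
  rw [Real.dist_eq, Real.dist_eq, Real.coe_toNNReal']
  exact (h s hs t ht).trans (mul_le_mul_of_nonneg_right (le_max_left K 0) (abs_nonneg _))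

section Pieces

variable {E : Type*} [NormedAddCommGroup E] [NormedSpace ℝ E] {f : ℝ → E} {φ : ℝ → ℝ}

theorem integral_comp_of_eqOn_const [CompleteSpace E] {a b θ : ℝ} (hab : a ≤ b)
    (hφ : ∀ s ∈ Set.Icc a b, φ s = θ) :
    ∫ s in a..b, f (φ s) = (b - a) • f θ := by
  rw [intervalIntegral.integral_congr (g := fun _ => f θ) fun s hs => by
    rw [Set.uIcc_of_le hab] at hs; simp only [hφ s hs]]
  exact intervalIntegral.integral_const (f θ)

theorem integral_comp_of_eqOn_affine {a b θ R : ℝ} (hR : R ≠ 0) (hab : a ≤ b)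
    (hφ : ∀ s ∈ Set.Icc a b, φ s = θ + (s - a) / R) :
    ∫ s in a..b, f (φ s) = R • ∫ t in θ..θ + (b - a) / R, f t := by
  rw [intervalIntegral.integral_congr (g := fun s => f (θ + (s - a) / R)) fun s hs => by
    rw [Set.uIcc_of_le hab] at hs; simp only [hφ s hs]]
  rw [intervalIntegral.integral_comp_sub_right (fun x => f (θ + x / R)),
    intervalIntegral.integral_comp_add_div _ hR, sub_self, zero_div, add_zero]

end Pieces

theorem integral_comp_segmentArcSegmentArcSegment {E : Type*} [NormedAddCommGroup E]
    [NormedSpace ℝ E] [CompleteSpace E] {f : ℝ → E} (hf : Continuous f) {φ : ℝ → ℝ}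
    {Ω R₁ R₂ d₁ d₂ d₃ L : ℝ} (hΩ : 0 ≤ Ω) (hR₁ : 0 < R₁) (hR₂ : 0 < R₂)
    (hd₁ : 0 ≤ d₁) (hd₂ : 0 ≤ d₂) (hd₃ : 0 ≤ d₃)
    (hL : L = d₁ + R₁ * Ω / 2 + d₂ + R₂ * Ω / 2 + d₃) (hφc : ContinuousOn φ (Set.Icc 0 L))
    (hφ0 : ∀ s ∈ Set.Icc (0:ℝ) d₁, φ s = 0)
    (hφ1 : ∀ s ∈ Set.Icc d₁ (d₁ + R₁ * Ω / 2), φ s = (s - d₁) / R₁)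
    (hφ2 : ∀ s ∈ Set.Icc (d₁ + R₁ * Ω / 2) (d₁ + R₁ * Ω / 2 + d₂), φ s = Ω / 2)
    (hφ3 : ∀ s ∈ Set.Icc (d₁ + R₁ * Ω / 2 + d₂) (d₁ + R₁ * Ω / 2 + d₂ + R₂ * Ω / 2),
      φ s = Ω / 2 + (s - d₁ - R₁ * Ω / 2 - d₂) / R₂)
    (hφ4 : ∀ s ∈ Set.Icc (d₁ + R₁ * Ω / 2 + d₂ + R₂ * Ω / 2) L, φ s = Ω) :
    ∫ s in (0:ℝ)..L, f (φ s) = d₁ • f 0 + R₁ • (∫ t in (0:ℝ)..Ω / 2, f t) + d₂ • f (Ω / 2)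
      + R₂ • (∫ t in Ω / 2..Ω, f t) + d₃ • f Ω := by
  set t₂ := d₁ + R₁ * Ω / 2
  set t₃ := t₂ + d₂
  set t₄ := t₃ + R₂ * Ω / 2
  have h₁ : d₁ ≤ t₂ := le_add_of_nonneg_right (by positivity)
  have h₂ : t₂ ≤ t₃ := by simp only [t₃]; linarith
  have h₃ : t₃ ≤ t₄ := le_add_of_nonneg_right (by positivity)
  have h₄ : t₄ ≤ L := by simp only [t₄, t₃, t₂, hL]; linarith
  have hint : ∀ a ∈ Set.Icc 0 L, ∀ b ∈ Set.Icc 0 L,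
      IntervalIntegrable (fun s => f (φ s)) MeasureTheory.volume a b := fun a ha b hb =>
    ((hf.comp_continuousOn hφc).mono (Set.uIcc_subset_Icc ha hb)).intervalIntegrable
  have m₀ : (0:ℝ) ∈ Set.Icc 0 L := ⟨le_rfl, by linarith⟩
  have m₁ : d₁ ∈ Set.Icc 0 L := ⟨hd₁, by linarith⟩
  have m₂ : t₂ ∈ Set.Icc 0 L := ⟨by linarith, by linarith⟩
  have m₃ : t₃ ∈ Set.Icc 0 L := ⟨by linarith, by linarith⟩
  have m₄ : t₄ ∈ Set.Icc 0 L := ⟨by linarith, h₄⟩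
  have m₅ : L ∈ Set.Icc 0 L := ⟨by linarith, le_rfl⟩
  rw [← intervalIntegral.integral_add_adjacent_intervals (hint _ m₀ _ m₄) (hint _ m₄ _ m₅),
    ← intervalIntegral.integral_add_adjacent_intervals (hint _ m₀ _ m₃) (hint _ m₃ _ m₄),
    ← intervalIntegral.integral_add_adjacent_intervals (hint _ m₀ _ m₂) (hint _ m₂ _ m₃),
    ← intervalIntegral.integral_add_adjacent_intervals (hint _ m₀ _ m₁) (hint _ m₁ _ m₂),
    integral_comp_of_eqOn_const hd₁ hφ0,
    integral_comp_of_eqOn_affine hR₁.ne' h₁ (θ := 0) fun s hs => by rw [hφ1 s hs, zero_add],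
    integral_comp_of_eqOn_const h₂ hφ2,
    integral_comp_of_eqOn_affine hR₂.ne' h₃ (θ := Ω / 2) fun s hs => by
      rw [hφ3 s hs]; simp only [t₃, t₂]; ring_nf,
    integral_comp_of_eqOn_const h₄ hφ4]
  have e₁ : 0 + (t₂ - d₁) / R₁ = Ω / 2 := by simp only [t₂]; field_simp; ring
  have e₂ : Ω / 2 + (t₄ - t₃) / R₂ = Ω := by simp only [t₄]; field_simp; ring
  have e₃ : L - t₄ = d₃ := by simp only [t₄, t₃, t₂, hL]; ring
  rw [e₁, e₂, e₃, sub_zero, add_sub_cancel_left]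

theorem eq_of_segmentArcSegmentArcSegment_endpoint {Ω R_a D R₁ R₂ d₁ d₂ d₃ : ℝ}
    (hΩ₀ : 0 < Ω) (hΩπ : Ω < π) (hR₁ : R_a ≤ R₁) (hR₂ : R_a ≤ R₂) (hd₁ : 0 ≤ d₁) (hd₂ : 0 ≤ d₂)
    (hx : d₁ + R₁ * sin (Ω / 2) + d₂ * cos (Ω / 2) + R₂ * (sin Ω - sin (Ω / 2)) + d₃ * cos Ω
      = R_a * sin Ω + D * cos Ω)
    (hy : R₁ * (1 - cos (Ω / 2)) + d₂ * sin (Ω / 2) + R₂ * (cos (Ω / 2) - cos Ω) + d₃ * sin Ω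
      = R_a * (1 - cos Ω) + D * sin Ω) :
    R₁ = R_a ∧ R₂ = R_a ∧ d₁ = 0 ∧ d₂ = 0 ∧ d₃ = D := by
  have hsin : 0 < sin Ω := sin_pos_of_pos_of_lt_pi hΩ₀ hΩπ
  have hsin' : 0 < sin (Ω / 2) := sin_pos_of_pos_of_lt_pi (by linarith) (by linarith)
  have hcos : cos Ω < cos (Ω / 2) :=
    cos_lt_cos_of_nonneg_of_le_pi (by linarith) hΩπ.le (by linarith)
  have hcos' : cos (Ω / 2) < 1 := by
    simpa using cos_lt_cos_of_nonneg_of_le_pi le_rfl (by linarith) (half_pos hΩ₀)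
  have key : d₁ * sin Ω + (R₁ - R_a) * (cos (Ω / 2) - cos Ω) + d₂ * sin (Ω / 2)
      + (R₂ - R_a) * (1 - cos (Ω / 2)) = 0 := by
    have hs : sin Ω = 2 * sin (Ω / 2) * cos (Ω / 2) := by rw [← sin_two_mul]; ring_nf
    have hc : cos Ω = 2 * cos (Ω / 2) ^ 2 - 1 := by rw [← cos_two_mul]; ring_nf
    rw [hs, hc] at hx hy ⊢
    linear_combination (2 * sin (Ω / 2) * cos (Ω / 2)) * hx - (2 * cos (Ω / 2) ^ 2 - 1) * hy
      + (2 * cos (Ω / 2) * (R₂ - R₁) + 4 * cos (Ω / 2) ^ 2 * (R_a - R₂)) * sin_sq_add_cos_sq (Ω / 2)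
  have t₁ : 0 ≤ d₁ * sin Ω := by positivity
  have t₂ : 0 ≤ (R₁ - R_a) * (cos (Ω / 2) - cos Ω) := mul_nonneg (by linarith) (by linarith)
  have t₃ : 0 ≤ d₂ * sin (Ω / 2) := by positivity
  have t₄ : 0 ≤ (R₂ - R_a) * (1 - cos (Ω / 2)) := mul_nonneg (by linarith) (by linarith)
  have hd₁0 : d₁ = 0 := (mul_eq_zero_iff_right hsin.ne').mp (by linarith)
  have hR₁a : R₁ = R_a :=
    sub_eq_zero.mp <| (mul_eq_zero_iff_right (sub_pos.mpr hcos).ne').mp (by linarith)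
  have hd₂0 : d₂ = 0 := (mul_eq_zero_iff_right hsin'.ne').mp (by linarith)
  have hR₂a : R₂ = R_a :=
    sub_eq_zero.mp <| (mul_eq_zero_iff_right (sub_pos.mpr hcos').ne').mp (by linarith)
  subst hR₁a hR₂a hd₂0
  refine ⟨rfl, rfl, hd₁0, rfl, mul_right_cancel₀ hsin.ne' ?_⟩
  linarith

theorem stmt13_general (Ω R_a D b₁ b₂ R₁ R₂ d₁ d₂ d₃ L : ℝ) (φ : ℝ → ℝ)
    (hΩ : Ω ∈ Set.Ico (Real.pi / 2) Real.pi) (hRa : 0 < R_a)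
    (hb₁ : b₁ = R_a * Real.sin Ω + D * Real.cos Ω)
    (hb₂ : b₂ = R_a * (1 - Real.cos Ω) + D * Real.sin Ω)
    (hR₁ : R_a ≤ R₁) (hR₂ : R_a ≤ R₂)
    (hd₁ : 0 ≤ d₁) (hd₂ : 0 ≤ d₂) (hd₃ : 0 ≤ d₃)
    (hL : L = d₁ + R₁ * Ω / 2 + d₂ + R₂ * Ω / 2 + d₃)
    (hφ0 : ∀ s ∈ Set.Icc (0:ℝ) d₁, φ s = 0)
    (hφ1 : ∀ s ∈ Set.Icc d₁ (d₁ + R₁ * Ω / 2), φ s = (s - d₁) / R₁)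
    (hφ2 : ∀ s ∈ Set.Icc (d₁ + R₁ * Ω / 2) (d₁ + R₁ * Ω / 2 + d₂), φ s = Ω / 2)
    (hφ3 : ∀ s ∈ Set.Icc (d₁ + R₁ * Ω / 2 + d₂) (d₁ + R₁ * Ω / 2 + d₂ + R₂ * Ω / 2),
      φ s = Ω / 2 + (s - d₁ - R₁ * Ω / 2 - d₂) / R₂)
    (hφ4 : ∀ s ∈ Set.Icc (d₁ + R₁ * Ω / 2 + d₂ + R₂ * Ω / 2) L, φ s = Ω)
    (h : Admissible Ω b₁ b₂ L φ) :
    R₁ = R_a ∧ R₂ = R_a ∧ d₁ = 0 ∧ d₂ = 0 ∧ d₃ = D := by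
  obtain ⟨-, -, ⟨K, -, hK⟩, -, -, hx, hy⟩ := h
  have hΩ₀ : 0 < Ω := by linarith [hΩ.1, pi_pos]
  have endpoint := fun {f : ℝ → ℝ} (hf : Continuous f) =>
    integral_comp_segmentArcSegmentArcSegment hf hΩ₀.le (hRa.trans_le hR₁) (hRa.trans_le hR₂)
      hd₁ hd₂ hd₃ hL hK.continuousOn hφ0 hφ1 hφ2 hφ3 hφ4
  rw [endpoint continuous_cos, hb₁] at hx
  rw [endpoint continuous_sin, hb₂] at hy
  simp only [integral_cos, integral_sin, smul_eq_mul, cos_zero, sin_zero, sub_zero, mul_one,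
    mul_zero, zero_add] at hx hy
  exact eq_of_segmentArcSegmentArcSegment_endpoint hΩ₀ hΩ.2 hR₁ hR₂ hd₁ hd₂ hx hy

/-- If `Ω ∈ [π/2, π)`, a concatenation segment(`d₁`)–arc(`R₁`, angle `Ω/2`)–segment(`d₂`)–
arc(`R₂`, angle `Ω/2`)–segment(`d₃`) with `R₁, R₂ ≥ R_a` is admissible only if it
reduces to the arc-then-segment curve: `R₁ = R₂ = R_a`, `d₁ = d₂ = 0`, `d₃ = D`. -/
theorem stmt13 (Ω R_a D b₁ b₂ R₁ R₂ d₁ d₂ d₃ L : ℝ) (φ : ℝ → ℝ)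
    (hΩ : Ω ∈ Set.Ico (Real.pi / 2) Real.pi) (hRa : 0 < R_a) (hD : 0 ≤ D)
    (hb₁ : b₁ = R_a * Real.sin Ω + D * Real.cos Ω)
    (hb₂ : b₂ = R_a * (1 - Real.cos Ω) + D * Real.sin Ω)
    (hR₁ : R_a ≤ R₁) (hR₂ : R_a ≤ R₂)
    (hd₁ : 0 ≤ d₁) (hd₂ : 0 ≤ d₂) (hd₃ : 0 ≤ d₃)
    (hL : L = d₁ + R₁ * Ω / 2 + d₂ + R₂ * Ω / 2 + d₃)
    (hφ0 : ∀ s ∈ Set.Icc (0:ℝ) d₁, φ s = 0)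
    (hφ1 : ∀ s ∈ Set.Icc d₁ (d₁ + R₁ * Ω / 2), φ s = (s - d₁) / R₁)
    (hφ2 : ∀ s ∈ Set.Icc (d₁ + R₁ * Ω / 2) (d₁ + R₁ * Ω / 2 + d₂), φ s = Ω / 2)
    (hφ3 : ∀ s ∈ Set.Icc (d₁ + R₁ * Ω / 2 + d₂) (d₁ + R₁ * Ω / 2 + d₂ + R₂ * Ω / 2),
      φ s = Ω / 2 + (s - d₁ - R₁ * Ω / 2 - d₂) / R₂)
    (hφ4 : ∀ s ∈ Set.Icc (d₁ + R₁ * Ω / 2 + d₂ + R₂ * Ω / 2) L, φ s = Ω)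
    (h : Admissible Ω b₁ b₂ L φ) :
    R₁ = R_a ∧ R₂ = R_a ∧ d₁ = 0 ∧ d₂ = 0 ∧ d₃ = D :=
  stmt13_general Ω R_a D b₁ b₂ R₁ R₂ d₁ d₂ d₃ L φ hΩ hRa hb₁ hb₂ hR₁ hR₂ hd₁ hd₂ hd₃ hL hφ0 hφ1 hφ2
    hφ3 hφ4 h
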